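/- Let k ≥ 0 and let q ∈ 𝒫_k. Then there exist P₁, P₂, P₃ ∈ 𝒫_{k−1} such that the row-wise divergence of M(P₁,P₂,P₃) equals the gradient of q, i.e. Σ_{j=1}^{3} ∂_{x_j}(x_j P_i) = ∂_{x_i} q for i = 1, 2, 3, and such that each row of the matrix q·I₃ − M(P₁,P₂,P₃) is the curl of a polynomial vector field with components in 𝒫_{k+1}. -/

import Mathlib

/-! The construction is linear in `q`, so it suffices to treat a homogeneous `q` of degree
`n ≤ k`. Euler's identity `x·∇p = n p` then does all the work: with `P = ∇q / (n + 2)` one gets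
`Σ_j ∂_j (x_j P_i) = (3 + (n - 1)) P_i = ∂_i q`. Each row `v = q eᵢ - x P_i` is then homogeneous
of degree `n` and divergence free, and for such fields `curl (v × x) = (n + 2) v`, so
`w = (v × x) / (n + 2)` is a potential of degree `n + 1`. -/

open MvPolynomial

noncomputable section

/-- Real polynomials in the three variables `x, y, z` (indexed `0, 1, 2`). -/
abbrev P3 := MvPolynomial (Fin 3) ℝ

/-- Membership in `𝒫_m`, the space of polynomials of total degree at most `m`,
with the convention `𝒫_m = {0}` for `m < 0`. -/
def memP (m : ℤ) (p : P3) : Prop := p = 0 ∨ (p.totalDegree : ℤ) ≤ m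

/-- The row-wise divergence of the matrix `M(P₁,P₂,P₃)` with entries `M i j = x_j * P i`:
its `i`-th component is `Σ_j ∂_{x_j} (x_j P_i)`. -/
def rowDiv (P : Fin 3 → P3) : Fin 3 → P3 := fun i => ∑ j : Fin 3, pderiv j (X j * P i)

/-- The curl of a polynomial vector field `(w₁, w₂, w₃)`. -/
def curl3 (w : Fin 3 → P3) : Fin 3 → P3 :=
  ![pderiv 1 (w 2) - pderiv 2 (w 1),
    pderiv 2 (w 0) - pderiv 0 (w 2),
    pderiv 0 (w 1) - pderiv 1 (w 0)]

open scoped Matrix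

lemma memP_natCast_iff {k : ℕ} {p : P3} : memP k p ↔ p.totalDegree ≤ k := by
  refine ⟨?_, fun h => Or.inr (by exact_mod_cast h)⟩
  rintro (rfl | h)
  · simp
  · exact_mod_cast h

lemma memP.mono {m m' : ℤ} {p : P3} (h : memP m p) (hm : m ≤ m') : memP m' p :=
  h.imp_right (·.trans hm)

lemma memP.add {m : ℤ} {p r : P3} (hp : memP m p) (hr : memP m r) : memP m (p + r) := by
  rcases hp with rfl | hp
  · simpa using hr
  rcases hr with rfl | hr
  · rw [add_zero]; exact Or.inr hp
  exact Or.inr (le_trans (by exact_mod_cast totalDegree_add p r) (max_le hp hr))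

lemma MvPolynomial.IsHomogeneous.memP {p : P3} {n : ℕ} (h : p.IsHomogeneous n) : memP n p :=
  Or.inr (by exact_mod_cast h.totalDegree_le)

lemma pderiv_eq_zero_of_isHomogeneous_zero {σ R : Type*} [CommSemiring R]
    {p : MvPolynomial σ R} (h : p.IsHomogeneous 0) (i : σ) : pderiv i p = 0 := by
  rw [← totalDegree_zero_iff_isHomogeneous, totalDegree_eq_zero_iff_eq_C] at h
  rw [h, pderiv_C]

def eulerOp (p : P3) : P3 := ∑ l, X l * pderiv l p

lemma MvPolynomial.IsHomogeneous.eulerOp_eq {p : P3} {n : ℕ} (h : p.IsHomogeneous n) :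
    eulerOp p = (n : ℝ) • p := by
  rw [eulerOp, h.sum_X_mul_pderiv, Nat.cast_smul_eq_nsmul]

lemma eulerOp_smul (c : ℝ) (p : P3) : eulerOp (c • p) = c • eulerOp p := by
  simp only [eulerOp, Derivation.map_smul, mul_smul_comm, Finset.smul_sum]

lemma eulerOp_sub (p r : P3) : eulerOp (p - r) = eulerOp p - eulerOp r := by
  simp only [eulerOp, map_sub, mul_sub, Finset.sum_sub_distrib]

lemma eulerOp_X_mul (j : Fin 3) (p : P3) : eulerOp (X j * p) = X j * p + X j * eulerOp p := by
  simp only [eulerOp, pderiv_mul, pderiv_X, mul_add, Finset.sum_add_distrib, Finset.mul_sum]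
  congr 1
  · simp [Pi.single_apply]
  · exact Finset.sum_congr rfl fun _ _ => by ring

lemma rowDiv_eq (P : Fin 3 → P3) (i : Fin 3) : rowDiv P i = (3 : ℝ) • P i + eulerOp (P i) := by
  simp only [rowDiv, eulerOp, pderiv_mul, pderiv_X_self, one_mul, Finset.sum_add_distrib]
  simp [ofNat_smul_eq_nsmul]

lemma curl3_add (w w' : Fin 3 → P3) : curl3 (w + w') = curl3 w + curl3 w' := by
  ext j : 1
  fin_cases j <;> simp [curl3] <;> ring

lemma curl3_smul (c : ℝ) (w : Fin 3 → P3) : curl3 (c • w) = c • curl3 w := by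
  ext j : 1
  fin_cases j <;> simp [curl3, smul_sub]

/-- `curl (v × x) = (div x) v - (div v) x + (x·∇) v - (v·∇) x = 3 v - 0 + c v - v`. -/
lemma curl3_cross_X {v : Fin 3 → P3} {c : ℝ} (hE : ∀ j, eulerOp (v j) = c • v j)
    (hdiv : ∑ j, pderiv j (v j) = 0) : curl3 (v ⨯₃ X) = (c + 2) • v := by
  have h0 := hE 0; have h1 := hE 1; have h2 := hE 2
  simp only [eulerOp, Fin.sum_univ_three, smul_eq_C_mul] at h0 h1 h2 hdiv
  ext j : 1
  fin_cases j <;> simp [curl3, cross_apply, pderiv_X, add_smul, smul_eq_C_mul, two_smul]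
  · linear_combination h0 - X 0 * hdiv
  · linear_combination h1 - X 1 * hdiv
  · linear_combination h2 - X 2 * hdiv

lemma isHomogeneous_cross_X {v : Fin 3 → P3} {n : ℕ} (hv : ∀ j, (v j).IsHomogeneous n)
    (l : Fin 3) : ((v ⨯₃ X) l).IsHomogeneous (n + 1) := by
  have h (a b : Fin 3) : (v a * X b).IsHomogeneous (n + 1) := (hv a).mul (isHomogeneous_X ℝ b)
  fin_cases l <;> exact (h _ _).sub (h _ _)

def scaledGrad (n : ℕ) (q : P3) (i : Fin 3) : P3 := ((n : ℝ) + 2)⁻¹ • pderiv i q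

def residualRow (n : ℕ) (q : P3) (i j : Fin 3) : P3 :=
  (if i = j then q else 0) - X j * scaledGrad n q i

section Homogeneous

variable {n : ℕ} {q : P3}

lemma memP_scaledGrad (hq : q.IsHomogeneous n) (i : Fin 3) :
    memP ((n : ℤ) - 1) (scaledGrad n q i) := by
  cases n with
  | zero => exact Or.inl (by simp [scaledGrad, pderiv_eq_zero_of_isHomogeneous_zero hq])
  | succ m =>
    have hp : (pderiv i q).IsHomogeneous m := hq.pderiv
    have := (hp.C_mul ((m + 1 + 2 : ℝ))⁻¹).totalDegree_le
    refine Or.inr ?_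
    rw [scaledGrad, smul_eq_C_mul]
    push_cast
    omega

lemma isHomogeneous_X_mul_scaledGrad (hq : q.IsHomogeneous n) (i j : Fin 3) :
    (X j * scaledGrad n q i).IsHomogeneous n := by
  cases n with
  | zero =>
    simpa [scaledGrad, pderiv_eq_zero_of_isHomogeneous_zero hq] using isHomogeneous_zero _ _ 0
  | succ m =>
    have hp : (pderiv i q).IsHomogeneous m := hq.pderiv
    rw [scaledGrad, smul_eq_C_mul, Nat.add_comm m 1]
    exact (isHomogeneous_X ℝ j).mul (hp.C_mul _)

lemma eulerOp_scaledGrad (hq : q.IsHomogeneous n) (i : Fin 3) :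
    eulerOp (scaledGrad n q i) = ((n : ℝ) - 1) • scaledGrad n q i := by
  cases n with
  | zero => simp [scaledGrad, pderiv_eq_zero_of_isHomogeneous_zero hq, eulerOp]
  | succ m =>
    have hp : (pderiv i q).IsHomogeneous m := hq.pderiv
    rw [scaledGrad, eulerOp_smul, hp.eulerOp_eq, smul_comm]
    push_cast
    ring_nf

lemma rowDiv_scaledGrad (hq : q.IsHomogeneous n) (i : Fin 3) :
    rowDiv (scaledGrad n q) i = pderiv i q := by
  rw [rowDiv_eq, eulerOp_scaledGrad hq, scaledGrad, smul_smul, smul_smul, ← add_smul]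
  conv_rhs => rw [← one_smul ℝ (pderiv i q)]
  congr 1
  field_simp
  ring

lemma isHomogeneous_residualRow (hq : q.IsHomogeneous n) (i j : Fin 3) :
    (residualRow n q i j).IsHomogeneous n := by
  refine IsHomogeneous.sub ?_ (isHomogeneous_X_mul_scaledGrad hq i j)
  split_ifs
  · exact hq
  · exact isHomogeneous_zero _ _ _

lemma eulerOp_residualRow (hq : q.IsHomogeneous n) (i j : Fin 3) :
    eulerOp (residualRow n q i j) = (n : ℝ) • residualRow n q i j := by
  have hX : eulerOp (X j * scaledGrad n q i) = (n : ℝ) • (X j * scaledGrad n q i) := by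
    rw [eulerOp_X_mul, eulerOp_scaledGrad hq, mul_smul_comm]
    module
  rw [residualRow, eulerOp_sub, hX, smul_sub]
  split_ifs
  · rw [hq.eulerOp_eq]
  · simp [eulerOp]

lemma sum_pderiv_residualRow (hq : q.IsHomogeneous n) (i : Fin 3) :
    ∑ j, pderiv j (residualRow n q i j) = 0 := by
  simp only [residualRow, map_sub, Finset.sum_sub_distrib, apply_ite (pderiv _), map_zero]
  rw [← rowDiv, rowDiv_scaledGrad hq, Finset.sum_ite_eq]
  simp

end Homogeneous

def QIdMemRbkPlusRk (k : ℕ) (q : P3) : Prop :=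
  ∃ P : Fin 3 → P3, (∀ i, memP ((k : ℤ) - 1) (P i)) ∧
    (∀ i, rowDiv P i = pderiv i q) ∧
    (∀ i : Fin 3, ∃ w : Fin 3 → P3, (∀ l, memP ((k : ℤ) + 1) (w l)) ∧
      ∀ j : Fin 3, (if i = j then q else 0) - X j * P i = curl3 w j)

lemma QIdMemRbkPlusRk.add {k : ℕ} {q q' : P3} (h : QIdMemRbkPlusRk k q)
    (h' : QIdMemRbkPlusRk k q') : QIdMemRbkPlusRk k (q + q') := by
  obtain ⟨P, hP, hdiv, hcurl⟩ := h
  obtain ⟨P', hP', hdiv', hcurl'⟩ := h'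
  refine ⟨P + P', fun i => (hP i).add (hP' i), fun i => ?_, fun i => ?_⟩
  · simp only [rowDiv, Pi.add_apply, mul_add, map_add, Finset.sum_add_distrib] at *
    rw [hdiv, hdiv']
  · obtain ⟨w, hw, hqw⟩ := hcurl i
    obtain ⟨w', hw', hqw'⟩ := hcurl' i
    refine ⟨w + w', fun l => (hw l).add (hw' l), fun j => ?_⟩
    simp only [curl3_add, Pi.add_apply, ← hqw, ← hqw']
    split_ifs <;> ring

lemma qIdMemRbkPlusRk_of_isHomogeneous {k n : ℕ} {q : P3} (hq : q.IsHomogeneous n)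
    (hn : n ≤ k) : QIdMemRbkPlusRk k q := by
  refine ⟨scaledGrad n q, fun i => (memP_scaledGrad hq i).mono (by omega),
    rowDiv_scaledGrad hq, fun i => ⟨((n : ℝ) + 2)⁻¹ • (residualRow n q i ⨯₃ X), fun l => ?_, ?_⟩⟩
  · have hw : (((n : ℝ) + 2)⁻¹ • (residualRow n q i ⨯₃ X) l).IsHomogeneous (n + 1) := by
      rw [smul_eq_C_mul]
      exact (isHomogeneous_cross_X (isHomogeneous_residualRow hq i) l).C_mul _
    exact hw.memP.mono (by omega)
  · rw [curl3_smul, curl3_cross_X (eulerOp_residualRow hq i) (sum_pderiv_residualRow hq i),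
      smul_smul, inv_mul_cancel₀ (by positivity), one_smul]
    exact fun _ => rfl

/-- For `q ∈ 𝒫_k` there are `P₁, P₂, P₃ ∈ 𝒫_{k-1}` such that the row-wise divergence of
`M(P₁,P₂,P₃)` is `∇q` and every row of `q·I₃ - M(P₁,P₂,P₃)` is the curl of a polynomial
vector field with components in `𝒫_{k+1}` (i.e. `q·I₃ ∈ ℛ̄^k ⊕ (ℛ^k)³`). -/
theorem qId_mem_Rbk_plus_Rk (k : ℕ) (q : P3) (hq : memP (k : ℤ) q) :
    ∃ P : Fin 3 → P3, (∀ i, memP ((k : ℤ) - 1) (P i)) ∧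
      (∀ i, rowDiv P i = pderiv i q) ∧
      (∀ i : Fin 3, ∃ w : Fin 3 → P3, (∀ l, memP ((k : ℤ) + 1) (w l)) ∧
        ∀ j : Fin 3, (if i = j then q else 0) - X j * P i = curl3 w j) := by
  have hdeg : q.totalDegree ≤ k := memP_natCast_iff.1 hq
  have hsum : QIdMemRbkPlusRk k
      (∑ n ∈ Finset.range (q.totalDegree + 1), homogeneousComponent n q) :=
    Finset.sum_induction _ _ (fun _ _ => QIdMemRbkPlusRk.add)
      (qIdMemRbkPlusRk_of_isHomogeneous (isHomogeneous_zero _ _ 0) k.zero_le)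
      fun n hn => qIdMemRbkPlusRk_of_isHomogeneous (homogeneousComponent_isHomogeneous n q)
        (by rw [Finset.mem_range] at hn; omega)
  rwa [sum_homogeneousComponent] at hsum
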